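/- arXiv:1808.01882 — 4 statements merged into one kernel-verified Lean document; each statement's English description precedes it below -/
import Mathlib

section
/- Let V be a real inner product space of dimension m ≥ 3, let Ric be a symmetric linear operator on V, let s be a real number, and let Riem : V × V × V × V → ℝ be the conformally flat curvature form determined by Ric and s. Suppose x, y ∈ V satisfy ‖x‖ = 1, ‖y‖ = 1, ⟨x,y⟩ = 0, and Ric x = λ·x, Ric y = μ·y for real numbers λ, μ. Then (ζ, x, y) with ζ = ((m−1)(λ+μ) + s)/((m−2)(m−1)) is an M-eigentriple of Riem, i.e. Riem(u, y, x, y) = ζ·⟨u, x⟩ and Riem(u, x, y, x) = ζ·⟨u, y⟩ for all u ∈ V. -/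
open scoped RealInnerProductSpace

/-- M-eigentriple of the conformally flat curvature form: if `x, y` are unit orthogonal
eigenvectors of the symmetric Ricci operator with eigenvalues `lam, mu`, then
`ζ = ((m-1)(lam+mu)+s)/((m-2)(m-1))` is an M-eigenvalue with M-eigenvectors `x, y`. -/
theorem meigen_conformally_flat
    {V : Type*} [NormedAddCommGroup V] [InnerProductSpace ℝ V]
    (m : ℕ) (hm : 3 ≤ m) (hdim : Module.finrank ℝ V = m)
    (Ric : V →ₗ[ℝ] V) (hRicSym : ∀ u v : V, ⟪Ric u, v⟫ = ⟪u, Ric v⟫)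
    (s : ℝ)
    (Riem : V → V → V → V → ℝ)
    (hRiem : ∀ u v z w : V, Riem u v z w =
      (1 / ((m : ℝ) - 2)) *
        (⟪u, z⟫ * ⟪Ric v, w⟫ - ⟪u, w⟫ * ⟪Ric v, z⟫
          + ⟪v, w⟫ * ⟪Ric u, z⟫ - ⟪v, z⟫ * ⟪Ric u, w⟫)
      + (s / (((m : ℝ) - 1) * ((m : ℝ) - 2))) *
        (⟪u, z⟫ * ⟪v, w⟫ - ⟪u, w⟫ * ⟪v, z⟫))
    (x y : V) (hx : ‖x‖ = 1) (hy : ‖y‖ = 1) (hxy : ⟪x, y⟫ = 0)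
    (lam mu : ℝ) (hRx : Ric x = lam • x) (hRy : Ric y = mu • y) :
    (∀ u : V, Riem u y x y =
      ((((m : ℝ) - 1) * (lam + mu) + s) / (((m : ℝ) - 2) * ((m : ℝ) - 1))) * ⟪u, x⟫) ∧
    (∀ u : V, Riem u x y x =
      ((((m : ℝ) - 1) * (lam + mu) + s) / (((m : ℝ) - 2) * ((m : ℝ) - 1))) * ⟪u, y⟫) := by
  have hm1 : ((m : ℝ) - 1) ≠ 0 := by
    have : (3:ℝ) ≤ (m:ℝ) := by exact_mod_cast hm
    linarith
  have hm2 : ((m : ℝ) - 2) ≠ 0 := by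
    have : (3:ℝ) ≤ (m:ℝ) := by exact_mod_cast hm
    linarith
  have hxx : ⟪x, x⟫ = 1 := by
    rw [real_inner_self_eq_norm_sq, hx]; norm_num
  have hyy : ⟪y, y⟫ = 1 := by
    rw [real_inner_self_eq_norm_sq, hy]; norm_num
  have hyx : ⟪y, x⟫ = 0 := by rw [real_inner_comm]; exact hxy
  constructor
  · intro u
    simp only [hRiem, hRicSym, hRx, hRy, real_inner_smul_left, real_inner_smul_right,
      hxx, hyy, hxy, hyx]
    field_simp
    ring
  · intro u
    simp only [hRiem, hRicSym, hRx, hRy, real_inner_smul_left, real_inner_smul_right,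
      hxx, hyy, hxy, hyx]
    field_simp
    ring
end

section
/- Let V be a real inner product space of dimension 3, let Ric be a symmetric linear operator on V, let s be a real number, and let Riem : V × V × V × V → ℝ be the conformally flat curvature form determined by Ric and s (with m = 3). Suppose x, y ∈ V satisfy ‖x‖ = 1, ‖y‖ = 1, ⟨x,y⟩ = 0, and Ric x = λ·x, Ric y = μ·y. Then (ζ, x, y) with ζ = λ + μ + s/2 is an M-eigentriple of Riem, i.e. Riem(u, y, x, y) = ζ·⟨u, x⟩ and Riem(u, x, y, x) = ζ·⟨u, y⟩ for all u ∈ V. -/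
open scoped RealInnerProductSpace

/-- M-eigentriple of the conformally flat curvature form in dimension 3:
`ζ = lam + mu + s/2` is an M-eigenvalue with M-eigenvectors `x, y`. -/
theorem meigen_conformally_flat_dim3
    {V : Type*} [NormedAddCommGroup V] [InnerProductSpace ℝ V]
    (hdim : Module.finrank ℝ V = 3)
    (Ric : V →ₗ[ℝ] V) (hRicSym : ∀ u v : V, ⟪Ric u, v⟫ = ⟪u, Ric v⟫)
    (s : ℝ)
    (Riem : V → V → V → V → ℝ)
    (hRiem : ∀ u v z w : V, Riem u v z w =
      (1 / ((3 : ℝ) - 2)) *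
        (⟪u, z⟫ * ⟪Ric v, w⟫ - ⟪u, w⟫ * ⟪Ric v, z⟫
          + ⟪v, w⟫ * ⟪Ric u, z⟫ - ⟪v, z⟫ * ⟪Ric u, w⟫)
      + (s / (((3 : ℝ) - 1) * ((3 : ℝ) - 2))) *
        (⟪u, z⟫ * ⟪v, w⟫ - ⟪u, w⟫ * ⟪v, z⟫))
    (x y : V) (hx : ‖x‖ = 1) (hy : ‖y‖ = 1) (hxy : ⟪x, y⟫ = 0)
    (lam mu : ℝ) (hRx : Ric x = lam • x) (hRy : Ric y = mu • y) :
    (∀ u : V, Riem u y x y = (lam + mu + s / 2) * ⟪u, x⟫) ∧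
    (∀ u : V, Riem u x y x = (lam + mu + s / 2) * ⟪u, y⟫) := by

  have hyx : ⟪y, x⟫ = 0 := by rw [real_inner_comm]; exact hxy
  have hxx : ⟪x, x⟫ = (1:ℝ) := by
    rw [real_inner_self_eq_norm_sq, hx]; norm_num
  have hyy : ⟪y, y⟫ = (1:ℝ) := by
    rw [real_inner_self_eq_norm_sq, hy]; norm_num
  constructor
  · intro u
    rw [hRiem]
    have h1 : ⟪Ric y, y⟫ = mu := by rw [hRy, real_inner_smul_left, hyy]; ring
    have h2 : ⟪Ric y, x⟫ = 0 := by rw [hRy, real_inner_smul_left, hyx]; ring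
    have h3 : ⟪Ric u, x⟫ = lam * ⟪u, x⟫ := by
      rw [hRicSym, hRx, real_inner_smul_right]
    have h4 : ⟪Ric u, y⟫ = mu * ⟪u, y⟫ := by
      rw [hRicSym, hRy, real_inner_smul_right]
    rw [h1, h2, h3, h4, hyy, hyx]
    ring
  · intro u
    rw [hRiem]
    have h1 : ⟪Ric x, x⟫ = lam := by rw [hRx, real_inner_smul_left, hxx]; ring
    have h2 : ⟪Ric x, y⟫ = 0 := by rw [hRx, real_inner_smul_left, hxy]; ring
    have h3 : ⟪Ric u, x⟫ = lam * ⟪u, x⟫ := by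
      rw [hRicSym, hRx, real_inner_smul_right]
    have h4 : ⟪Ric u, y⟫ = mu * ⟪u, y⟫ := by
      rw [hRicSym, hRy, real_inner_smul_right]
    rw [h1, h2, h3, h4, hxx, hxy]
    ring
end

section
/- Let V be a 3-dimensional real inner product space with orthonormal basis e₁, e₂, e₃, and let C : V × V × V × V → ℝ be a quadrilinear map satisfying the curvature symmetries. If C is totally trace-free, i.e. C(e₁,x,e₁,y) + C(e₂,x,e₂,y) + C(e₃,x,e₃,y) = 0 for all x, y ∈ V, then C is identically zero. -/
set_option maxHeartbeats 1000000 in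
/-- In dimension 3, a quadrilinear map with the curvature symmetries that is totally
trace-free (all Ricci-type contractions vanish) must vanish identically: the Weyl
tensor of a 3-dimensional manifold is zero. -/
theorem weyl_vanishes_dim3
    {V : Type*} [NormedAddCommGroup V] [InnerProductSpace ℝ V]
    (hdim : Module.finrank ℝ V = 3)
    (b : OrthonormalBasis (Fin 3) ℝ V)
    (C : V →ₗ[ℝ] V →ₗ[ℝ] V →ₗ[ℝ] V →ₗ[ℝ] ℝ)
    (hanti1 : ∀ X Y Z W : V, C X Y Z W = - C Y X Z W)
    (hanti2 : ∀ X Y Z W : V, C X Y Z W = - C X Y W Z)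
    (hpair : ∀ X Y Z W : V, C X Y Z W = C Z W X Y)
    (hbianchi : ∀ X Y Z W : V, C X Y Z W + C X Z W Y + C X W Y Z = 0)
    (htracefree : ∀ x y : V, ∑ i : Fin 3, C (b i) x (b i) y = 0) :
    ∀ X Y Z W : V, C X Y Z W = 0 := by
  have z1 : ∀ X Z W : V, C X X Z W = 0 := fun X Z W => by
    have := hanti1 X X Z W; linarith
  have z2 : ∀ X Y Z : V, C X Y Z Z = 0 := fun X Y Z => by
    have := hanti2 X Y Z Z; linarith
  have tr : ∀ j l : Fin 3,
      C (b 0) (b j) (b 0) (b l) + C (b 1) (b j) (b 1) (b l) + C (b 2) (b j) (b 2) (b l) = 0 := by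
    intro j l
    have := htracefree (b j) (b l)
    simpa [Fin.sum_univ_three] using this
  -- diagonal components of the curvature operator vanish
  have d12 : C (b 0) (b 1) (b 0) (b 1) = 0 := by
    have t0 := tr 0 0; have t1 := tr 1 1; have t2 := tr 2 2
    linarith only [t0, t1, t2, z1 (b 0) (b 0) (b 0), z1 (b 1) (b 1) (b 1), z1 (b 2) (b 2) (b 2),
      hanti1 (b 1) (b 0) (b 1) (b 0), hanti2 (b 0) (b 1) (b 1) (b 0),
      hanti1 (b 2) (b 0) (b 2) (b 0), hanti2 (b 0) (b 2) (b 2) (b 0),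
      hanti1 (b 2) (b 1) (b 2) (b 1), hanti2 (b 1) (b 2) (b 2) (b 1),
      hanti1 (b 0) (b 1) (b 0) (b 1), hanti2 (b 1) (b 0) (b 0) (b 1),
      hanti1 (b 0) (b 2) (b 0) (b 2), hanti2 (b 2) (b 0) (b 0) (b 2),
      hanti1 (b 1) (b 2) (b 1) (b 2), hanti2 (b 2) (b 1) (b 1) (b 2)]
  have d13 : C (b 0) (b 2) (b 0) (b 2) = 0 := by
    have t0 := tr 0 0; have t1 := tr 1 1; have t2 := tr 2 2
    linarith only [t0, t1, t2, z1 (b 0) (b 0) (b 0), z1 (b 1) (b 1) (b 1), z1 (b 2) (b 2) (b 2),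
      hanti1 (b 1) (b 0) (b 1) (b 0), hanti2 (b 0) (b 1) (b 1) (b 0),
      hanti1 (b 2) (b 0) (b 2) (b 0), hanti2 (b 0) (b 2) (b 2) (b 0),
      hanti1 (b 2) (b 1) (b 2) (b 1), hanti2 (b 1) (b 2) (b 2) (b 1),
      hanti1 (b 0) (b 1) (b 0) (b 1), hanti2 (b 1) (b 0) (b 0) (b 1),
      hanti1 (b 0) (b 2) (b 0) (b 2), hanti2 (b 2) (b 0) (b 0) (b 2),
      hanti1 (b 1) (b 2) (b 1) (b 2), hanti2 (b 2) (b 1) (b 1) (b 2)]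
  have d23 : C (b 1) (b 2) (b 1) (b 2) = 0 := by
    have t0 := tr 0 0; have t1 := tr 1 1; have t2 := tr 2 2
    linarith only [t0, t1, t2, z1 (b 0) (b 0) (b 0), z1 (b 1) (b 1) (b 1), z1 (b 2) (b 2) (b 2),
      hanti1 (b 1) (b 0) (b 1) (b 0), hanti2 (b 0) (b 1) (b 1) (b 0),
      hanti1 (b 2) (b 0) (b 2) (b 0), hanti2 (b 0) (b 2) (b 2) (b 0),
      hanti1 (b 2) (b 1) (b 2) (b 1), hanti2 (b 1) (b 2) (b 2) (b 1),
      hanti1 (b 0) (b 1) (b 0) (b 1), hanti2 (b 1) (b 0) (b 0) (b 1),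
      hanti1 (b 0) (b 2) (b 0) (b 2), hanti2 (b 2) (b 0) (b 0) (b 2),
      hanti1 (b 1) (b 2) (b 1) (b 2), hanti2 (b 2) (b 1) (b 1) (b 2)]
  -- off-diagonal components
  have ca : C (b 0) (b 1) (b 0) (b 2) = 0 := by
    have t := tr 1 2
    linarith only [t, z1 (b 1) (b 1) (b 2), z2 (b 2) (b 1) (b 2)]
  have cb : C (b 0) (b 1) (b 1) (b 2) = 0 := by
    have t := tr 0 2
    linarith only [t, z1 (b 0) (b 0) (b 2), z2 (b 2) (b 0) (b 2),
      hanti1 (b 1) (b 0) (b 1) (b 2)]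
  have cc : C (b 0) (b 2) (b 1) (b 2) = 0 := by
    have t := tr 0 1
    linarith only [t, z1 (b 0) (b 0) (b 1), z2 (b 1) (b 0) (b 1),
      hanti1 (b 2) (b 0) (b 2) (b 1), hanti2 (b 0) (b 2) (b 2) (b 1)]
  have h0000 : C (b 0) (b 0) (b 0) (b 0) = 0 := z1 _ _ _
  have h0001 : C (b 0) (b 0) (b 0) (b 1) = 0 := z1 _ _ _
  have h0002 : C (b 0) (b 0) (b 0) (b 2) = 0 := z1 _ _ _
  have h0010 : C (b 0) (b 0) (b 1) (b 0) = 0 := z1 _ _ _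
  have h0011 : C (b 0) (b 0) (b 1) (b 1) = 0 := z1 _ _ _
  have h0012 : C (b 0) (b 0) (b 1) (b 2) = 0 := z1 _ _ _
  have h0020 : C (b 0) (b 0) (b 2) (b 0) = 0 := z1 _ _ _
  have h0021 : C (b 0) (b 0) (b 2) (b 1) = 0 := z1 _ _ _
  have h0022 : C (b 0) (b 0) (b 2) (b 2) = 0 := z1 _ _ _
  have h0100 : C (b 0) (b 1) (b 0) (b 0) = 0 := z2 _ _ _
  have h0101 : C (b 0) (b 1) (b 0) (b 1) = 0 := by linarith only [d12]
  have h0102 : C (b 0) (b 1) (b 0) (b 2) = 0 := by linarith only [ca]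
  have h0110 : C (b 0) (b 1) (b 1) (b 0) = 0 := by linarith only [hanti2 (b 0) (b 1) (b 1) (b 0), d12]
  have h0111 : C (b 0) (b 1) (b 1) (b 1) = 0 := z2 _ _ _
  have h0112 : C (b 0) (b 1) (b 1) (b 2) = 0 := by linarith only [cb]
  have h0120 : C (b 0) (b 1) (b 2) (b 0) = 0 := by linarith only [hanti2 (b 0) (b 1) (b 2) (b 0), ca]
  have h0121 : C (b 0) (b 1) (b 2) (b 1) = 0 := by linarith only [hanti2 (b 0) (b 1) (b 2) (b 1), cb]
  have h0122 : C (b 0) (b 1) (b 2) (b 2) = 0 := z2 _ _ _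
  have h0200 : C (b 0) (b 2) (b 0) (b 0) = 0 := z2 _ _ _
  have h0201 : C (b 0) (b 2) (b 0) (b 1) = 0 := by linarith only [hpair (b 0) (b 2) (b 0) (b 1), ca]
  have h0202 : C (b 0) (b 2) (b 0) (b 2) = 0 := by linarith only [d13]
  have h0210 : C (b 0) (b 2) (b 1) (b 0) = 0 := by linarith only [hanti2 (b 0) (b 2) (b 1) (b 0), hpair (b 0) (b 2) (b 0) (b 1), ca]
  have h0211 : C (b 0) (b 2) (b 1) (b 1) = 0 := z2 _ _ _
  have h0212 : C (b 0) (b 2) (b 1) (b 2) = 0 := by linarith only [cc]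
  have h0220 : C (b 0) (b 2) (b 2) (b 0) = 0 := by linarith only [hanti2 (b 0) (b 2) (b 2) (b 0), d13]
  have h0221 : C (b 0) (b 2) (b 2) (b 1) = 0 := by linarith only [hanti2 (b 0) (b 2) (b 2) (b 1), cc]
  have h0222 : C (b 0) (b 2) (b 2) (b 2) = 0 := z2 _ _ _
  have h1000 : C (b 1) (b 0) (b 0) (b 0) = 0 := z2 _ _ _
  have h1001 : C (b 1) (b 0) (b 0) (b 1) = 0 := by linarith only [hanti1 (b 1) (b 0) (b 0) (b 1), d12]
  have h1002 : C (b 1) (b 0) (b 0) (b 2) = 0 := by linarith only [hanti1 (b 1) (b 0) (b 0) (b 2), ca]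
  have h1010 : C (b 1) (b 0) (b 1) (b 0) = 0 := by linarith only [hanti1 (b 1) (b 0) (b 1) (b 0), hanti2 (b 0) (b 1) (b 1) (b 0), d12]
  have h1011 : C (b 1) (b 0) (b 1) (b 1) = 0 := z2 _ _ _
  have h1012 : C (b 1) (b 0) (b 1) (b 2) = 0 := by linarith only [hanti1 (b 1) (b 0) (b 1) (b 2), cb]
  have h1020 : C (b 1) (b 0) (b 2) (b 0) = 0 := by linarith only [hanti1 (b 1) (b 0) (b 2) (b 0), hanti2 (b 0) (b 1) (b 2) (b 0), ca]
  have h1021 : C (b 1) (b 0) (b 2) (b 1) = 0 := by linarith only [hanti1 (b 1) (b 0) (b 2) (b 1), hanti2 (b 0) (b 1) (b 2) (b 1), cb]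
  have h1022 : C (b 1) (b 0) (b 2) (b 2) = 0 := z2 _ _ _
  have h1100 : C (b 1) (b 1) (b 0) (b 0) = 0 := z1 _ _ _
  have h1101 : C (b 1) (b 1) (b 0) (b 1) = 0 := z1 _ _ _
  have h1102 : C (b 1) (b 1) (b 0) (b 2) = 0 := z1 _ _ _
  have h1110 : C (b 1) (b 1) (b 1) (b 0) = 0 := z1 _ _ _
  have h1111 : C (b 1) (b 1) (b 1) (b 1) = 0 := z1 _ _ _
  have h1112 : C (b 1) (b 1) (b 1) (b 2) = 0 := z1 _ _ _
  have h1120 : C (b 1) (b 1) (b 2) (b 0) = 0 := z1 _ _ _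
  have h1121 : C (b 1) (b 1) (b 2) (b 1) = 0 := z1 _ _ _
  have h1122 : C (b 1) (b 1) (b 2) (b 2) = 0 := z1 _ _ _
  have h1200 : C (b 1) (b 2) (b 0) (b 0) = 0 := z2 _ _ _
  have h1201 : C (b 1) (b 2) (b 0) (b 1) = 0 := by linarith only [hpair (b 1) (b 2) (b 0) (b 1), cb]
  have h1202 : C (b 1) (b 2) (b 0) (b 2) = 0 := by linarith only [hpair (b 1) (b 2) (b 0) (b 2), cc]
  have h1210 : C (b 1) (b 2) (b 1) (b 0) = 0 := by linarith only [hanti2 (b 1) (b 2) (b 1) (b 0), hpair (b 1) (b 2) (b 0) (b 1), cb]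
  have h1211 : C (b 1) (b 2) (b 1) (b 1) = 0 := z2 _ _ _
  have h1212 : C (b 1) (b 2) (b 1) (b 2) = 0 := by linarith only [d23]
  have h1220 : C (b 1) (b 2) (b 2) (b 0) = 0 := by linarith only [hanti2 (b 1) (b 2) (b 2) (b 0), hpair (b 1) (b 2) (b 0) (b 2), cc]
  have h1221 : C (b 1) (b 2) (b 2) (b 1) = 0 := by linarith only [hanti2 (b 1) (b 2) (b 2) (b 1), d23]
  have h1222 : C (b 1) (b 2) (b 2) (b 2) = 0 := z2 _ _ _
  have h2000 : C (b 2) (b 0) (b 0) (b 0) = 0 := z2 _ _ _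
  have h2001 : C (b 2) (b 0) (b 0) (b 1) = 0 := by linarith only [hanti1 (b 2) (b 0) (b 0) (b 1), hpair (b 0) (b 2) (b 0) (b 1), ca]
  have h2002 : C (b 2) (b 0) (b 0) (b 2) = 0 := by linarith only [hanti1 (b 2) (b 0) (b 0) (b 2), d13]
  have h2010 : C (b 2) (b 0) (b 1) (b 0) = 0 := by linarith only [hanti1 (b 2) (b 0) (b 1) (b 0), hanti2 (b 0) (b 2) (b 1) (b 0), hpair (b 0) (b 2) (b 0) (b 1), ca]
  have h2011 : C (b 2) (b 0) (b 1) (b 1) = 0 := z2 _ _ _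
  have h2012 : C (b 2) (b 0) (b 1) (b 2) = 0 := by linarith only [hanti1 (b 2) (b 0) (b 1) (b 2), cc]
  have h2020 : C (b 2) (b 0) (b 2) (b 0) = 0 := by linarith only [hanti1 (b 2) (b 0) (b 2) (b 0), hanti2 (b 0) (b 2) (b 2) (b 0), d13]
  have h2021 : C (b 2) (b 0) (b 2) (b 1) = 0 := by linarith only [hanti1 (b 2) (b 0) (b 2) (b 1), hanti2 (b 0) (b 2) (b 2) (b 1), cc]
  have h2022 : C (b 2) (b 0) (b 2) (b 2) = 0 := z2 _ _ _
  have h2100 : C (b 2) (b 1) (b 0) (b 0) = 0 := z2 _ _ _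
  have h2101 : C (b 2) (b 1) (b 0) (b 1) = 0 := by linarith only [hanti1 (b 2) (b 1) (b 0) (b 1), hpair (b 1) (b 2) (b 0) (b 1), cb]
  have h2102 : C (b 2) (b 1) (b 0) (b 2) = 0 := by linarith only [hanti1 (b 2) (b 1) (b 0) (b 2), hpair (b 1) (b 2) (b 0) (b 2), cc]
  have h2110 : C (b 2) (b 1) (b 1) (b 0) = 0 := by linarith only [hanti1 (b 2) (b 1) (b 1) (b 0), hanti2 (b 1) (b 2) (b 1) (b 0), hpair (b 1) (b 2) (b 0) (b 1), cb]
  have h2111 : C (b 2) (b 1) (b 1) (b 1) = 0 := z2 _ _ _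
  have h2112 : C (b 2) (b 1) (b 1) (b 2) = 0 := by linarith only [hanti1 (b 2) (b 1) (b 1) (b 2), d23]
  have h2120 : C (b 2) (b 1) (b 2) (b 0) = 0 := by linarith only [hanti1 (b 2) (b 1) (b 2) (b 0), hanti2 (b 1) (b 2) (b 2) (b 0), hpair (b 1) (b 2) (b 0) (b 2), cc]
  have h2121 : C (b 2) (b 1) (b 2) (b 1) = 0 := by linarith only [hanti1 (b 2) (b 1) (b 2) (b 1), hanti2 (b 1) (b 2) (b 2) (b 1), d23]
  have h2122 : C (b 2) (b 1) (b 2) (b 2) = 0 := z2 _ _ _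
  have h2200 : C (b 2) (b 2) (b 0) (b 0) = 0 := z1 _ _ _
  have h2201 : C (b 2) (b 2) (b 0) (b 1) = 0 := z1 _ _ _
  have h2202 : C (b 2) (b 2) (b 0) (b 2) = 0 := z1 _ _ _
  have h2210 : C (b 2) (b 2) (b 1) (b 0) = 0 := z1 _ _ _
  have h2211 : C (b 2) (b 2) (b 1) (b 1) = 0 := z1 _ _ _
  have h2212 : C (b 2) (b 2) (b 1) (b 2) = 0 := z1 _ _ _
  have h2220 : C (b 2) (b 2) (b 2) (b 0) = 0 := z1 _ _ _
  have h2221 : C (b 2) (b 2) (b 2) (b 1) = 0 := z1 _ _ _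
  have h2222 : C (b 2) (b 2) (b 2) (b 2) = 0 := z1 _ _ _

  have key : ∀ i j k l : Fin 3, C (b i) (b j) (b k) (b l) = 0 := by
    intro i j k l
    fin_cases i <;> fin_cases j <;> fin_cases k <;> fin_cases l
    exacts [h0000, h0001, h0002, h0010, h0011, h0012, h0020, h0021, h0022, h0100, h0101, h0102, h0110, h0111, h0112, h0120, h0121, h0122, h0200, h0201, h0202, h0210, h0211, h0212, h0220, h0221, h0222, h1000, h1001, h1002, h1010, h1011, h1012, h1020, h1021, h1022, h1100, h1101, h1102, h1110, h1111, h1112, h1120, h1121, h1122, h1200, h1201, h1202, h1210, h1211, h1212, h1220, h1221, h1222, h2000, h2001, h2002, h2010, h2011, h2012, h2020, h2021, h2022, h2100, h2101, h2102, h2110, h2111, h2112, h2120, h2121, h2122, h2200, h2201, h2202, h2210, h2211, h2212, h2220, h2221, h2222]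
  have hC : C = 0 := by
    apply b.toBasis.ext; intro i
    apply b.toBasis.ext; intro j
    apply b.toBasis.ext; intro k
    apply b.toBasis.ext; intro l
    simpa using key i j k l
  intro X Y Z W
  rw [hC]
  simp
end

section
/- Let V be a real inner product space of dimension m ≥ 3 with orthonormal basis e₁, …, e_m, and let Ric and Ric′ be symmetric linear operators on V with Ric eᵢ = λᵢ·eᵢ and Ric′ eᵢ = λᵢ′·eᵢ for all i. Let s = Σᵢ λᵢ and s′ = Σᵢ λᵢ′, and let Riem and Riem′ be the conformally flat curvature forms determined by (Ric, s) and (Ric′, s′) respectively. If the C(m,2) M-eigenvalues agree, i.e. ((m−1)(λᵢ + λⱼ) + s)/((m−2)(m−1)) = ((m−1)(λᵢ′ + λⱼ′) + s′)/((m−2)(m−1)) for all i ≠ j, then Riem = Riem′. (The Riemann curvature tensor of a conformally flat manifold is determined by its C(m,2) M-eigenvalues.) -/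
open scoped RealInnerProductSpace

/-!
Clearing the common denominator `(m-2)(m-1)`, equality of the M-eigenvalues says that
`dᵢ = λᵢ - λᵢ'` satisfies `(m-1)(dᵢ + dⱼ) + ∑ d = 0` for all `i ≠ j`. Comparing the pairs
`(i, k)` and `(j, k)` for a third index `k` shows that `d` is a constant `a`, and then
`(3m-2) a = 0` forces `a = 0`. Hence `Ric` and `Ric'` agree on the basis, so they are equal,
as are `s` and `s'`, and the two curvature forms coincide.
-/

open Finset

theorem apply_eq_apply_of_forall_ne_add_eq {ι M : Type*} [Fintype ι] [AddCancelCommMonoid M]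
    (hι : 3 ≤ Fintype.card ι) (d : ι → M) (c : M)
    (hd : ∀ i j, i ≠ j → d i + d j = c) (i j : ι) : d i = d j := by
  classical
  obtain ⟨k, -, hk⟩ := exists_mem_notMem_of_card_lt_card (s := {i, j}) (t := univ) <| by
    rw [card_univ]
    exact card_le_two.trans_lt hι
  simp only [mem_insert, mem_singleton, not_or] at hk
  exact add_right_cancel ((hd i k (Ne.symm hk.1)).trans (hd j k (Ne.symm hk.2)).symm)

theorem eq_zero_of_card_sub_one_mul_add_add_sum_eq_zero {ι : Type*} [Fintype ι]
    (hι : 3 ≤ Fintype.card ι) (d : ι → ℝ)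
    (hd : ∀ i j, i ≠ j → ((Fintype.card ι : ℝ) - 1) * (d i + d j) + ∑ k, d k = 0) :
    d = 0 := by
  have hn : (3 : ℝ) ≤ Fintype.card ι := by exact_mod_cast hι
  set n : ℝ := (Fintype.card ι : ℝ)
  have hconst : ∀ i j, d i = d j :=
    apply_eq_apply_of_forall_ne_add_eq hι d (-(∑ k, d k) / (n - 1)) fun i j hij => by
      rw [eq_div_iff (by linarith)]
      linear_combination hd i j hij
  obtain ⟨i, j, hij⟩ := Fintype.exists_pair_of_one_lt_card (by omega : 1 < Fintype.card ι)
  have hsum : ∑ k, d k = n * d i := by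
    simp [fun k => hconst k i, n]
  have h := hd i j hij
  rw [hsum, ← hconst i j] at h
  have hdi : (3 * n - 2) * d i = 0 := by linear_combination h
  funext k
  rw [hconst k i, Pi.zero_apply]
  exact (mul_eq_zero.mp hdi).resolve_left (by linarith)

theorem eq_of_mEigenvalues_eq {ι : Type*} [Fintype ι] (hι : 3 ≤ Fintype.card ι)
    (lam lam' : ι → ℝ)
    (h : ∀ i j, i ≠ j →
      (((Fintype.card ι : ℝ) - 1) * (lam i + lam j) + ∑ k, lam k) /
          (((Fintype.card ι : ℝ) - 2) * ((Fintype.card ι : ℝ) - 1)) =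
        (((Fintype.card ι : ℝ) - 1) * (lam' i + lam' j) + ∑ k, lam' k) /
          (((Fintype.card ι : ℝ) - 2) * ((Fintype.card ι : ℝ) - 1))) :
    lam = lam' := by
  have hn : (3 : ℝ) ≤ Fintype.card ι := by exact_mod_cast hι
  rw [← sub_eq_zero]
  refine eq_zero_of_card_sub_one_mul_add_add_sum_eq_zero hι _ fun i j hij => ?_
  have h := (div_left_inj' (by nlinarith)).mp (h i j hij)
  simp only [Pi.sub_apply, sum_sub_distrib]
  linear_combination h

theorem conformally_flat_determined_by_meigenvalues_general
    {V : Type*} [NormedAddCommGroup V] [InnerProductSpace ℝ V]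
    (m : ℕ) (hm : 3 ≤ m)
    (b : OrthonormalBasis (Fin m) ℝ V)
    (Ric Ric' : V →ₗ[ℝ] V)
    (lam lam' : Fin m → ℝ)
    (hRic : ∀ i, Ric (b i) = lam i • b i)
    (hRic' : ∀ i, Ric' (b i) = lam' i • b i)
    (s s' : ℝ) (hs : s = ∑ i, lam i) (hs' : s' = ∑ i, lam' i)
    (Riem Riem' : V → V → V → V → ℝ)
    (hRiem : ∀ u v z w : V, Riem u v z w =
      (1 / ((m : ℝ) - 2)) *
        (⟪u, z⟫ * ⟪Ric v, w⟫ - ⟪u, w⟫ * ⟪Ric v, z⟫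
          + ⟪v, w⟫ * ⟪Ric u, z⟫ - ⟪v, z⟫ * ⟪Ric u, w⟫)
      + (s / (((m : ℝ) - 1) * ((m : ℝ) - 2))) *
        (⟪u, z⟫ * ⟪v, w⟫ - ⟪u, w⟫ * ⟪v, z⟫))
    (hRiem' : ∀ u v z w : V, Riem' u v z w =
      (1 / ((m : ℝ) - 2)) *
        (⟪u, z⟫ * ⟪Ric' v, w⟫ - ⟪u, w⟫ * ⟪Ric' v, z⟫
          + ⟪v, w⟫ * ⟪Ric' u, z⟫ - ⟪v, z⟫ * ⟪Ric' u, w⟫)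
      + (s' / (((m : ℝ) - 1) * ((m : ℝ) - 2))) *
        (⟪u, z⟫ * ⟪v, w⟫ - ⟪u, w⟫ * ⟪v, z⟫))
    (heigen : ∀ i j : Fin m, i ≠ j →
      (((m : ℝ) - 1) * (lam i + lam j) + s) / (((m : ℝ) - 2) * ((m : ℝ) - 1)) =
      (((m : ℝ) - 1) * (lam' i + lam' j) + s') / (((m : ℝ) - 2) * ((m : ℝ) - 1))) :
    ∀ u v z w : V, Riem u v z w = Riem' u v z w := by
  subst hs hs'
  have hlam : lam = lam' :=
    eq_of_mEigenvalues_eq (by simpa using hm) lam lam' (by simpa only [Fintype.card_fin])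
  subst hlam
  have hRicEq : Ric = Ric' := b.toBasis.ext fun i => by simp [hRic, hRic']
  intro u v z w
  rw [hRiem, hRiem', hRicEq]

/-- The conformally flat curvature form is determined by its `C(m,2)` M-eigenvalues:
if two conformally flat curvature forms, built from Ricci operators diagonalized by a
common orthonormal basis, have the same M-eigenvalues
`((m-1)(λᵢ+λⱼ)+s)/((m-2)(m-1))` for all `i ≠ j`, then the forms coincide. -/
theorem conformally_flat_determined_by_meigenvalues
    {V : Type*} [NormedAddCommGroup V] [InnerProductSpace ℝ V]
    (m : ℕ) (hm : 3 ≤ m)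
    (b : OrthonormalBasis (Fin m) ℝ V)
    (Ric Ric' : V →ₗ[ℝ] V)
    (hRicSym : ∀ u v : V, ⟪Ric u, v⟫ = ⟪u, Ric v⟫)
    (hRic'Sym : ∀ u v : V, ⟪Ric' u, v⟫ = ⟪u, Ric' v⟫)
    (lam lam' : Fin m → ℝ)
    (hRic : ∀ i, Ric (b i) = lam i • b i)
    (hRic' : ∀ i, Ric' (b i) = lam' i • b i)
    (s s' : ℝ) (hs : s = ∑ i, lam i) (hs' : s' = ∑ i, lam' i)
    (Riem Riem' : V → V → V → V → ℝ)
    (hRiem : ∀ u v z w : V, Riem u v z w =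
      (1 / ((m : ℝ) - 2)) *
        (⟪u, z⟫ * ⟪Ric v, w⟫ - ⟪u, w⟫ * ⟪Ric v, z⟫
          + ⟪v, w⟫ * ⟪Ric u, z⟫ - ⟪v, z⟫ * ⟪Ric u, w⟫)
      + (s / (((m : ℝ) - 1) * ((m : ℝ) - 2))) *
        (⟪u, z⟫ * ⟪v, w⟫ - ⟪u, w⟫ * ⟪v, z⟫))
    (hRiem' : ∀ u v z w : V, Riem' u v z w =
      (1 / ((m : ℝ) - 2)) *
        (⟪u, z⟫ * ⟪Ric' v, w⟫ - ⟪u, w⟫ * ⟪Ric' v, z⟫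
          + ⟪v, w⟫ * ⟪Ric' u, z⟫ - ⟪v, z⟫ * ⟪Ric' u, w⟫)
      + (s' / (((m : ℝ) - 1) * ((m : ℝ) - 2))) *
        (⟪u, z⟫ * ⟪v, w⟫ - ⟪u, w⟫ * ⟪v, z⟫))
    (heigen : ∀ i j : Fin m, i ≠ j →
      (((m : ℝ) - 1) * (lam i + lam j) + s) / (((m : ℝ) - 2) * ((m : ℝ) - 1)) =
      (((m : ℝ) - 1) * (lam' i + lam' j) + s') / (((m : ℝ) - 2) * ((m : ℝ) - 1))) :
    ∀ u v z w : V, Riem u v z w = Riem' u v z w :=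
  conformally_flat_determined_by_meigenvalues_general m hm b Ric Ric' lam lam' hRic hRic' s s' hs
    hs' Riem Riem' hRiem hRiem' heigen
end
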